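/- Let p_r : ℕ → [0,1] for r = 1,...,K be sequences such that lim_{N→∞} (1/N) Σ_{j=1}^N p_r(j) p_s(j) = m_{r,s} for all r,s, and let M_r(N) be sequences of positive integers with M_r(N)/M(N) → c_r > 0 where M(N) = Σ_r M_r(N). Let σ_1(N) ≥ ... ≥ σ_K(N) be the K largest singular values of the M(N)×N matrix Σ_{k=1}^K E_k P_k', where P_k = (p_k(1),...,p_k(N))' and E_k is the indicator of the k-th block of M_k(N) rows. Then for each 1 ≤ j ≤ K, σ_j(N)²/(N·M(N)) converges to λ_j, the j-th largest eigenvalue of the K×K matrix Q with entries Q_{r,s} = √(c_r c_s) m_{r,s}. -/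

import Mathlib

open Matrix Filter

/-- The eigenvalues of a Hermitian matrix, listed with multiplicity in decreasing order. -/
noncomputable def sortedEigs {n : ℕ} (A : Matrix (Fin n) (Fin n) ℝ) : Fin n → ℝ :=
  fun i => if hA : A.IsHermitian then hA.eigenvalues (Tuple.sort hA.eigenvalues i.rev) else 0

/-- The `j`-th largest eigenvalue (0-indexed), with the convention `0` when `j` is out of
range. -/
noncomputable def nthEig {n : ℕ} (A : Matrix (Fin n) (Fin n) ℝ) (j : ℕ) : ℝ :=
  if h : j < n then sortedEigs A ⟨j, h⟩ else 0

/-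
With `C_N` the `N × K` matrix `(C_N)_{i r} = √(M_r(N)) p_r(i)`, one has `A_Nᵀ A_N = C_N C_Nᵀ`.
For `j < K` its `j`-th eigenvalue equals that of the `K × K` Gram matrix `C_Nᵀ C_N`, because
`x ↦ C x / √μ` carries orthonormal eigenvectors of `Cᵀ C` with eigenvalue `μ > 0` to orthonormal
eigenvectors of `C Cᵀ`, and the min-max principle then compares the two spectra both ways.
The `(r, s)` entry of `C_Nᵀ C_N / (N M(N))` is `√(M_r M_s / M²) · (1/N) Σ_i p_r(i) p_s(i)`, which
tends to `Q_{r,s}`; the min-max principle also gives Weyl's bound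
`|λ_j(B) - λ_j(Q)| ≤ K · max_{r,s} |B_{rs} - Q_{rs}|`, so the eigenvalues converge.
-/

def DotOrthonormal {ι m : Type*} [DecidableEq ι] [Fintype m] (v : ι → m → ℝ) : Prop :=
  ∀ k l, v k ⬝ᵥ v l = if k = l then 1 else 0

namespace DotOrthonormal

variable {ι m : Type*} [DecidableEq ι] [Fintype m] {v : ι → m → ℝ}

theorem comp_injective {κ : Type*} [DecidableEq κ] (hv : DotOrthonormal v) {f : κ → ι}
    (hf : Function.Injective f) : DotOrthonormal (v ∘ f) := fun k l => by
  simp only [Function.comp_apply, hv (f k) (f l), hf.eq_iff]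

variable [Fintype ι]

theorem sum_smul_dotProduct (hv : DotOrthonormal v) (a : ι → ℝ) (l : ι) :
    (∑ k, a k • v k) ⬝ᵥ v l = a l := by
  simp [sum_dotProduct, hv _ l]

theorem sum_smul_dotProduct_sum_smul (hv : DotOrthonormal v) (a b : ι → ℝ) :
    (∑ k, a k • v k) ⬝ᵥ (∑ l, b l • v l) = ∑ k, a k * b k := by
  simp [dotProduct_sum, hv.sum_smul_dotProduct, mul_comm]

theorem linearIndependent (hv : DotOrthonormal v) : LinearIndependent ℝ v :=
  Fintype.linearIndependent_iff.2 fun a ha l => by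
    simpa [ha] using (hv.sum_smul_dotProduct a l).symm

theorem finrank_span (hv : DotOrthonormal v) :
    Module.finrank ℝ (Submodule.span ℝ (Set.range v)) = Fintype.card ι :=
  finrank_span_eq_card hv.linearIndependent

theorem dotProduct_mulVec_sum_smul (hv : DotOrthonormal v) {A : Matrix m m ℝ} {μ : ι → ℝ}
    (hAv : ∀ k, A *ᵥ v k = μ k • v k) (a : ι → ℝ) :
    (∑ k, a k • v k) ⬝ᵥ (A *ᵥ ∑ k, a k • v k) = ∑ k, μ k * a k ^ 2 := by
  have hA : A *ᵥ ∑ k, a k • v k = ∑ k, (a k * μ k) • v k := by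
    simp only [mulVec_sum, mulVec_smul, hAv, smul_smul]
  rw [hA, hv.sum_smul_dotProduct_sum_smul]
  exact Finset.sum_congr rfl fun k _ => by ring

theorem mul_dotProduct_self_le (hv : DotOrthonormal v) {A : Matrix m m ℝ} {μ : ι → ℝ}
    (hAv : ∀ k, A *ᵥ v k = μ k • v k) {t : ℝ} (ht : ∀ k, t ≤ μ k) :
    ∀ x ∈ Submodule.span ℝ (Set.range v), t * (x ⬝ᵥ x) ≤ x ⬝ᵥ (A *ᵥ x) := by
  intro x hx
  obtain ⟨a, rfl⟩ := (Submodule.mem_span_range_iff_exists_fun ℝ).1 hx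
  rw [hv.dotProduct_mulVec_sum_smul hAv, hv.sum_smul_dotProduct_sum_smul, Finset.mul_sum]
  exact Finset.sum_le_sum fun k _ => by nlinarith [ht k, sq_nonneg (a k)]

theorem dotProduct_mulVec_lt (hv : DotOrthonormal v) {A : Matrix m m ℝ} {μ : ι → ℝ}
    (hAv : ∀ k, A *ᵥ v k = μ k • v k) {t : ℝ} (ht : ∀ k, μ k < t) :
    ∀ x ∈ Submodule.span ℝ (Set.range v), x ≠ 0 → x ⬝ᵥ (A *ᵥ x) < t * (x ⬝ᵥ x) := by
  intro x hx hx0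
  obtain ⟨a, rfl⟩ := (Submodule.mem_span_range_iff_exists_fun ℝ).1 hx
  obtain ⟨k₀, hk₀⟩ : ∃ k, a k ≠ 0 := by
    by_contra! h
    exact hx0 (by simp [h])
  rw [hv.dotProduct_mulVec_sum_smul hAv, hv.sum_smul_dotProduct_sum_smul, Finset.mul_sum]
  refine Finset.sum_lt_sum (fun k _ => by nlinarith [ht k, sq_nonneg (a k)])
    ⟨k₀, Finset.mem_univ _, ?_⟩
  nlinarith [ht k₀, pow_pos (abs_pos.2 hk₀) 2, sq_abs (a k₀)]

theorem exists_ne_zero_mem_span_inf {κ : Type*} [Fintype κ] [DecidableEq κ] {u : κ → m → ℝ}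
    (hv : DotOrthonormal v) (hu : DotOrthonormal u)
    (hcard : Fintype.card m < Fintype.card ι + Fintype.card κ) :
    ∃ x ≠ 0, x ∈ Submodule.span ℝ (Set.range v) ∧ x ∈ Submodule.span ℝ (Set.range u) := by
  have h : ¬ Disjoint (Submodule.span ℝ (Set.range v)) (Submodule.span ℝ (Set.range u)) := by
    intro hdisj
    have := Submodule.finrank_add_finrank_le_of_disjoint hdisj
    rw [hv.finrank_span, hu.finrank_span, Module.finrank_fintype_fun_eq_card] at this
    omega
  obtain ⟨x, ⟨hxv, hxu⟩, hx0⟩ := Submodule.exists_mem_ne_zero_of_ne_bot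
    (fun hbot => h (disjoint_iff.2 hbot))
  exact ⟨x, hx0, hxv, hxu⟩

end DotOrthonormal

theorem abs_dotProduct_mulVec_le {m : Type*} [Fintype m] {M : Matrix m m ℝ} {δ : ℝ}
    (hM : ∀ i k, |M i k| ≤ δ) (x : m → ℝ) :
    |x ⬝ᵥ (M *ᵥ x)| ≤ Fintype.card m * δ * (x ⬝ᵥ x) := by
  have hterm : ∀ i k, |x i * (M i k * x k)| ≤ δ * (x i ^ 2 + x k ^ 2) / 2 := fun i k => by
    have hδ : 0 ≤ δ := (abs_nonneg _).trans (hM i k)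
    rw [abs_mul, abs_mul, mul_left_comm]
    have : |x i| * |x k| ≤ (x i ^ 2 + x k ^ 2) / 2 := by
      nlinarith [sq_nonneg (|x i| - |x k|), sq_abs (x i), sq_abs (x k)]
    nlinarith [mul_le_mul (hM i k) this (by positivity) hδ]
  calc |x ⬝ᵥ (M *ᵥ x)| ≤ ∑ i, ∑ k, |x i * (M i k * x k)| := by
        simp only [dotProduct, mulVec, Finset.mul_sum]
        exact (Finset.abs_sum_le_sum_abs _ _).trans
          (Finset.sum_le_sum fun i _ => Finset.abs_sum_le_sum_abs _ _)
    _ ≤ ∑ i, ∑ k, δ * (x i ^ 2 + x k ^ 2) / 2 :=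
        Finset.sum_le_sum fun i _ => Finset.sum_le_sum fun k _ => hterm i k
    _ = Fintype.card m * δ * (x ⬝ᵥ x) := by
        have hsplit : ∀ i k, δ * (x i ^ 2 + x k ^ 2) / 2 = δ / 2 * x i ^ 2 + δ / 2 * x k ^ 2 :=
          fun i k => by ring
        simp only [hsplit, dotProduct, ← sq, Finset.sum_add_distrib, ← Finset.mul_sum,
          Finset.sum_const, Finset.card_univ, nsmul_eq_mul]
        ring

section Gram

variable {m l : Type*} [Fintype l]

theorem isHermitian_transpose_mul_self (C : Matrix l m ℝ) : (Cᵀ * C).IsHermitian := by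
  simpa using isHermitian_conjTranspose_mul_self C

variable [Fintype m]

theorem posSemidef_mul_transpose_self (C : Matrix l m ℝ) : (C * Cᵀ).PosSemidef := by
  simpa using posSemidef_self_mul_conjTranspose C

theorem mulVec_dotProduct_mulVec (C : Matrix l m ℝ) (x y : m → ℝ) :
    (C *ᵥ x) ⬝ᵥ (C *ᵥ y) = x ⬝ᵥ ((Cᵀ * C) *ᵥ y) := by
  rw [← mulVec_mulVec, mulVec_transpose, dotProduct_comm, dotProduct_mulVec, dotProduct_comm]

variable {ι : Type*} {C : Matrix l m ℝ} {v : ι → m → ℝ} {μ : ι → ℝ}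

theorem mul_transpose_mulVec_inv_sqrt_smul_mulVec (hCv : ∀ k, (Cᵀ * C) *ᵥ v k = μ k • v k)
    (k : ι) :
    (C * Cᵀ) *ᵥ ((√(μ k))⁻¹ • C *ᵥ v k) = μ k • (√(μ k))⁻¹ • C *ᵥ v k := by
  rw [mulVec_smul, mulVec_mulVec, Matrix.mul_assoc, ← mulVec_mulVec, hCv, mulVec_smul, smul_comm]

variable [DecidableEq ι]

theorem DotOrthonormal.inv_sqrt_smul_mulVec (hv : DotOrthonormal v) (hμ : ∀ k, 0 < μ k)
    (hCv : ∀ k, (Cᵀ * C) *ᵥ v k = μ k • v k) :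
    DotOrthonormal fun k => (√(μ k))⁻¹ • C *ᵥ v k := by
  intro k k'
  simp only [smul_dotProduct, dotProduct_smul, mulVec_dotProduct_mulVec, hCv, hv k k',
    smul_eq_mul]
  split_ifs with h
  · subst h
    field_simp
    rw [Real.sq_sqrt (hμ k).le, div_self (hμ k).ne']
  · simp

end Gram

section SortedEigs

variable {n : ℕ} {A B : Matrix (Fin n) (Fin n) ℝ}

theorem sortedEigs_of_isHermitian (hA : A.IsHermitian) (i : Fin n) :
    sortedEigs A i = hA.eigenvalues (Tuple.sort hA.eigenvalues i.rev) :=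
  dif_pos hA

theorem sortedEigs_antitone (hA : A.IsHermitian) : Antitone (sortedEigs A) := fun i k hik => by
  simp only [sortedEigs_of_isHermitian hA]
  exact Tuple.monotone_sort hA.eigenvalues (Fin.rev_le_rev.2 hik)

theorem sortedEigs_nonneg (hA : A.PosSemidef) (i : Fin n) : 0 ≤ sortedEigs A i := by
  rw [sortedEigs_of_isHermitian hA.1]
  exact hA.eigenvalues_nonneg _

noncomputable def sortedEigvec (hA : A.IsHermitian) (i : Fin n) : Fin n → ℝ :=
  ⇑(hA.eigenvectorBasis (Tuple.sort hA.eigenvalues i.rev))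

theorem mulVec_sortedEigvec (hA : A.IsHermitian) (i : Fin n) :
    A *ᵥ sortedEigvec hA i = sortedEigs A i • sortedEigvec hA i := by
  rw [sortedEigs_of_isHermitian hA]
  exact hA.mulVec_eigenvectorBasis _

theorem dotOrthonormal_sortedEigvec (hA : A.IsHermitian) : DotOrthonormal (sortedEigvec hA) := by
  intro k l
  have := orthonormal_iff_ite.1 hA.eigenvectorBasis.orthonormal
    (Tuple.sort hA.eigenvalues k.rev) (Tuple.sort hA.eigenvalues l.rev)
  simpa [sortedEigvec, PiLp.inner_apply, dotProduct, mul_comm] using this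

theorem sortedEigs_le_sortedEigs_castLE (hA : A.IsHermitian) {j : ℕ} (hj : j < n)
    (k : Fin (j + 1)) : sortedEigs A ⟨j, hj⟩ ≤ sortedEigs A (Fin.castLE hj k) :=
  sortedEigs_antitone hA (Fin.mk_le_mk.2 (Nat.lt_succ_iff.1 k.2))

theorem dotOrthonormal_sortedEigvec_castLE (hA : A.IsHermitian) {j : ℕ} (hj : j < n) :
    DotOrthonormal (sortedEigvec hA ∘ Fin.castLE hj) :=
  (dotOrthonormal_sortedEigvec hA).comp_injective (Fin.castLE_injective hj)

theorem le_sortedEigs_of_rayleigh (hA : A.IsHermitian) {j : ℕ} (hj : j < n) {t : ℝ}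
    {v : Fin (j + 1) → Fin n → ℝ} (hv : DotOrthonormal v)
    (hR : ∀ x ∈ Submodule.span ℝ (Set.range v), t * (x ⬝ᵥ x) ≤ x ⬝ᵥ (A *ᵥ x)) :
    t ≤ sortedEigs A ⟨j, hj⟩ := by
  by_contra! hlt
  -- the `(j + 1)`-dimensional span of `v` meets that of the eigenvectors for `λ_j, …, λ_{n-1}`
  let f : Fin (n - j) → Fin n := fun k => ⟨j + k, by omega⟩
  have hu : DotOrthonormal (sortedEigvec hA ∘ f) :=
    (dotOrthonormal_sortedEigvec hA).comp_injective fun k l hkl =>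
      Fin.ext (by simpa [f] using hkl)
  have hut : ∀ k, sortedEigs A (f k) < t := fun k =>
    (sortedEigs_antitone hA (Fin.mk_le_mk.2 (Nat.le_add_right j k))).trans_lt hlt
  obtain ⟨x, hx0, hxv, hxu⟩ := hv.exists_ne_zero_mem_span_inf hu (by simp; omega)
  exact (hR x hxv).not_gt
    (hu.dotProduct_mulVec_lt (fun k => mulVec_sortedEigvec hA _) hut x hxu hx0)

theorem mul_dotProduct_self_le_of_mem_span_sortedEigvec (hA : A.IsHermitian) {j : ℕ}
    (hj : j < n) :
    ∀ x ∈ Submodule.span ℝ (Set.range (sortedEigvec hA ∘ Fin.castLE hj)),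
      sortedEigs A ⟨j, hj⟩ * (x ⬝ᵥ x) ≤ x ⬝ᵥ (A *ᵥ x) :=
  (dotOrthonormal_sortedEigvec_castLE hA hj).mul_dotProduct_self_le
    (fun _ => mulVec_sortedEigvec hA _) (sortedEigs_le_sortedEigs_castLE hA hj)

theorem le_sortedEigs_of_eigenvectors (hA : A.IsHermitian) {j : ℕ} (hj : j < n) {t : ℝ}
    {v : Fin (j + 1) → Fin n → ℝ} (hv : DotOrthonormal v) {μ : Fin (j + 1) → ℝ}
    (hAv : ∀ k, A *ᵥ v k = μ k • v k) (ht : ∀ k, t ≤ μ k) :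
    t ≤ sortedEigs A ⟨j, hj⟩ :=
  le_sortedEigs_of_rayleigh hA hj hv (hv.mul_dotProduct_self_le hAv ht)

theorem sortedEigs_le_add (hA : A.IsHermitian) (hB : B.IsHermitian) {j : ℕ} (hj : j < n)
    {δ : ℝ} (hAB : ∀ i k, |A i k - B i k| ≤ δ) :
    sortedEigs A ⟨j, hj⟩ ≤ sortedEigs B ⟨j, hj⟩ + n * δ := by
  suffices sortedEigs A ⟨j, hj⟩ - n * δ ≤ sortedEigs B ⟨j, hj⟩ by linarith
  refine le_sortedEigs_of_rayleigh hB hj (dotOrthonormal_sortedEigvec_castLE hA hj)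
    fun x hx => ?_
  have hA_x := mul_dotProduct_self_le_of_mem_span_sortedEigvec hA hj x hx
  have hdiff : |x ⬝ᵥ ((A - B) *ᵥ x)| ≤ n * δ * (x ⬝ᵥ x) := by
    simpa using abs_dotProduct_mulVec_le (M := A - B) hAB x
  rw [sub_mulVec, dotProduct_sub] at hdiff
  rw [sub_mul]
  linarith [(abs_le.1 hdiff).2]

theorem tendsto_sortedEigs {B : ℕ → Matrix (Fin n) (Fin n) ℝ} (hB : ∀ N, (B N).IsHermitian)
    (hA : A.IsHermitian) (hlim : Tendsto B atTop (nhds A)) (i : Fin n) :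
    Tendsto (fun N => sortedEigs (B N) i) atTop (nhds (sortedEigs A i)) := by
  let δ : ℕ → ℝ := fun N => ∑ r, ∑ s, |B N r s - A r s|
  have hδ : Tendsto δ atTop (nhds 0) := by
    have hentry : ∀ r s, Tendsto (fun N => |B N r s - A r s|) atTop (nhds 0) := fun r s => by
      simpa using ((tendsto_pi_nhds.1 (tendsto_pi_nhds.1 hlim r) s).sub_const (A r s)).abs
    simpa using tendsto_finsetSum _ fun r _ => tendsto_finsetSum _ fun s _ => hentry r s
  have hentry_le : ∀ N r s, |B N r s - A r s| ≤ δ N := fun N r s =>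
    (Finset.single_le_sum (f := fun s => |B N r s - A r s|) (fun _ _ => abs_nonneg _)
      (Finset.mem_univ s)).trans
    (Finset.single_le_sum (f := fun r => ∑ s, |B N r s - A r s|)
      (fun _ _ => Finset.sum_nonneg fun _ _ => abs_nonneg _) (Finset.mem_univ r))
  have hbound : ∀ N, ‖sortedEigs (B N) i - sortedEigs A i‖ ≤ n * δ N := fun N => by
    rw [Real.norm_eq_abs, abs_sub_le_iff]
    constructor
    · linarith [sortedEigs_le_add (hB N) hA i.2 (hentry_le N)]
    · linarith [sortedEigs_le_add hA (hB N) i.2 fun r s =>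
        abs_sub_comm (A r s) _ ▸ hentry_le N r s]
  simpa using (squeeze_zero_norm hbound (by simpa using hδ.const_mul (n : ℝ))).add_const
    (sortedEigs A i)

theorem mul_sortedEigs_le_sortedEigs_smul (hA : A.IsHermitian) {a : ℝ} (ha : 0 ≤ a)
    (i : Fin n) : a * sortedEigs A i ≤ sortedEigs (a • A) i :=
  le_sortedEigs_of_eigenvectors (hA.smul (.all a)) i.2 (dotOrthonormal_sortedEigvec_castLE hA i.2)
    (μ := fun k => a * sortedEigs A (Fin.castLE i.2 k))
    (fun k => by simp [smul_mulVec, mulVec_sortedEigvec, smul_smul])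
    fun k => mul_le_mul_of_nonneg_left (sortedEigs_le_sortedEigs_castLE hA i.2 k) ha

theorem sortedEigs_smul (hA : A.IsHermitian) {a : ℝ} (ha : 0 ≤ a) (i : Fin n) :
    sortedEigs (a • A) i = a * sortedEigs A i := by
  rcases ha.eq_or_lt with rfl | ha
  · rw [zero_smul, zero_mul, sortedEigs_of_isHermitian isHermitian_zero,
      (isHermitian_zero.eigenvalues_eq_zero_iff).2 rfl, Pi.zero_apply]
  refine le_antisymm ?_ (mul_sortedEigs_le_sortedEigs_smul hA ha.le i)
  have := mul_sortedEigs_le_sortedEigs_smul (hA.smul (.all a)) (inv_nonneg.2 ha.le) i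
  rw [smul_smul, inv_mul_cancel₀ ha.ne', one_smul] at this
  calc sortedEigs (a • A) i = a * (a⁻¹ * sortedEigs (a • A) i) := by field_simp
    _ ≤ a * sortedEigs A i := mul_le_mul_of_nonneg_left this ha.le

end SortedEigs

theorem sortedEigs_transpose_mul_le {N K : ℕ} (C : Matrix (Fin N) (Fin K) ℝ) {j : ℕ}
    (hjK : j < K) (hjN : j < N) :
    sortedEigs (Cᵀ * C) ⟨j, hjK⟩ ≤ sortedEigs (C * Cᵀ) ⟨j, hjN⟩ := by
  have hCC := posSemidef_mul_transpose_self C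
  have hCtC := isHermitian_transpose_mul_self C
  rcases le_or_gt (sortedEigs (Cᵀ * C) ⟨j, hjK⟩) 0 with hle | hpos
  · exact hle.trans (sortedEigs_nonneg hCC _)
  have hμ := sortedEigs_le_sortedEigs_castLE hCtC hjK
  have hCv (k : Fin (j + 1)) := mulVec_sortedEigvec hCtC (Fin.castLE hjK k)
  exact le_sortedEigs_of_eigenvectors hCC.1 hjN
    ((dotOrthonormal_sortedEigvec_castLE hCtC hjK).inv_sqrt_smul_mulVec
      (fun k => hpos.trans_le (hμ k)) hCv)
    (mul_transpose_mulVec_inv_sqrt_smul_mulVec hCv) hμ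

theorem sortedEigs_mul_transpose {N K : ℕ} (C : Matrix (Fin N) (Fin K) ℝ) {j : ℕ}
    (hjN : j < N) (hjK : j < K) :
    sortedEigs (C * Cᵀ) ⟨j, hjN⟩ = sortedEigs (Cᵀ * C) ⟨j, hjK⟩ :=
  le_antisymm (by simpa using sortedEigs_transpose_mul_le Cᵀ hjN hjK)
    (sortedEigs_transpose_mul_le C hjK hjN)

noncomputable def weightedColumns {ι n : Type*} (w : ι → ℝ) (P : ι → n → ℝ) : Matrix n ι ℝ :=
  of fun j k => √(w k) * P k j

theorem transpose_mul_self_eq_weightedColumns {ι n : Type*} [Fintype ι] {mult : ι → ℕ}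
    {A : Matrix (Σ k, Fin (mult k)) n ℝ} {P : ι → n → ℝ} (hA : ∀ i j, A i j = P i.1 j) :
    Aᵀ * A = weightedColumns (fun k => (mult k : ℝ)) P *
      (weightedColumns (fun k => (mult k : ℝ)) P)ᵀ := by
  ext j j'
  simp only [mul_apply, transpose_apply, weightedColumns, of_apply, hA]
  rw [← Finset.univ_sigma_univ, Finset.sum_sigma]
  refine Finset.sum_congr rfl fun k _ => ?_
  dsimp only
  rw [Finset.sum_const, Finset.card_univ, Fintype.card_fin, nsmul_eq_mul]
  have := Real.mul_self_sqrt (Nat.cast_nonneg (α := ℝ) (mult k))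
  linear_combination (P k j * P k j') * this.symm

theorem weightedColumns_transpose_mul_apply {ι n : Type*} [Fintype n] (w : ι → ℝ)
    (P : ι → n → ℝ) (r s : ι) :
    ((weightedColumns w P)ᵀ * weightedColumns w P) r s =
      √(w r) * √(w s) * ∑ j, P r j * P s j := by
  simp only [mul_apply, transpose_apply, weightedColumns, of_apply, Finset.mul_sum]
  exact Finset.sum_congr rfl fun j _ => by ring

theorem tendsto_smul_weightedColumns_gram {K : ℕ} {p : Fin K → ℕ → ℝ} {m : Fin K → Fin K → ℝ}
    (hm : ∀ r s, Tendsto (fun N : ℕ => (1 / (N : ℝ)) * ∑ j ∈ Finset.range N, p r j * p s j)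
      atTop (nhds (m r s)))
    {Mr : Fin K → ℕ → ℕ} {M : ℕ → ℕ} {c : Fin K → ℝ}
    (hcr : ∀ r, Tendsto (fun N : ℕ => (Mr r N : ℝ) / (M N : ℝ)) atTop (nhds (c r))) :
    Tendsto (fun N : ℕ => ((N : ℝ) * M N)⁻¹ •
        ((weightedColumns (fun r => (Mr r N : ℝ)) fun r (i : Fin N) => p r i)ᵀ *
          weightedColumns (fun r => (Mr r N : ℝ)) fun r (i : Fin N) => p r i))
      atTop (nhds (of fun r s => √(c r * c s) * m r s)) := by
  refine tendsto_pi_nhds.2 fun r => tendsto_pi_nhds.2 fun s =>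
    ((((hcr r).mul (hcr s)).sqrt).mul (hm r s)).congr fun N => ?_
  rw [Matrix.smul_apply, weightedColumns_transpose_mul_apply, Fin.sum_univ_eq_sum_range
    (fun j => p r j * p s j), div_mul_div_comm, Real.sqrt_div' _ (mul_self_nonneg _),
    Real.sqrt_mul_self (Nat.cast_nonneg _), Real.sqrt_mul (Nat.cast_nonneg _), smul_eq_mul]
  field_simp

theorem singular_values_limit_general (K : ℕ)
    (p : Fin K → ℕ → ℝ)
    (m : Fin K → Fin K → ℝ)
    (hm : ∀ r s, Tendsto (fun N : ℕ => (1 / (N : ℝ)) * ∑ j ∈ Finset.range N, p r j * p s j)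
      atTop (nhds (m r s)))
    (Mr : Fin K → ℕ → ℕ)
    (M : ℕ → ℕ)
    (c : Fin K → ℝ)
    (hcr : ∀ r, Tendsto (fun N : ℕ => (Mr r N : ℝ) / (M N : ℝ)) atTop (nhds (c r)))
    (A : (N : ℕ) → Matrix (Σ k, Fin (Mr k N)) (Fin N) ℝ)
    (hA : ∀ N (i : Σ k, Fin (Mr k N)) (j : Fin N), A N i j = p i.1 (j : ℕ))
    (Q : Matrix (Fin K) (Fin K) ℝ)
    (hQ : ∀ r s, Q r s = Real.sqrt (c r * c s) * m r s) :
    ∀ j : ℕ, j < K →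
      Tendsto (fun N : ℕ => nthEig ((A N)ᵀ * A N) j / ((N : ℝ) * (M N : ℝ)))
        atTop (nhds (nthEig Q j)) := by
  intro j hjK
  have hm_symm : ∀ r s, m r s = m s r := fun r s =>
    tendsto_nhds_unique (hm r s) (by simpa only [mul_comm (p s _)] using hm s r)
  have hQ_herm : Q.IsHermitian := by
    ext r s
    simp [hQ, hm_symm r s, mul_comm (c r)]
  have hQ_lim : Q = of fun r s => √(c r * c s) * m r s := ext fun r s => hQ r s
  rw [nthEig, dif_pos hjK]
  refine (tendsto_sortedEigs (fun N => (isHermitian_transpose_mul_self _).smul (.all _)) hQ_herm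
    (hQ_lim ▸ tendsto_smul_weightedColumns_gram hm hcr) ⟨j, hjK⟩).congr' ?_
  filter_upwards [eventually_gt_atTop j] with N hjN
  rw [nthEig, dif_pos hjN,
    transpose_mul_self_eq_weightedColumns (P := fun r (i : Fin N) => p r i) (hA N),
    sortedEigs_mul_transpose _ hjN hjK,
    sortedEigs_smul (isHermitian_transpose_mul_self _) (by positivity), div_eq_inv_mul]

/-- Lemma: the squared singular values of `Σ_k E_k P_k'`, normalized by `N·M(N)`, converge
to the eigenvalues of `Q` with `Q_{r,s} = √(c_r c_s) m_{r,s}`.  The squared singular values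
of the `M(N)×N` matrix `A_N` are realized as the decreasingly ordered eigenvalues of
`A_Nᵀ A_N` (which agree with those of `A_N A_Nᵀ` in the range `j < K`). -/
theorem singular_values_limit (K : ℕ) (hK : 0 < K)
    (p : Fin K → ℕ → ℝ) (hp : ∀ r j, p r j ∈ Set.Icc (0:ℝ) 1)
    (m : Fin K → Fin K → ℝ)
    (hm : ∀ r s, Tendsto (fun N : ℕ => (1 / (N : ℝ)) * ∑ j ∈ Finset.range N, p r j * p s j)
      atTop (nhds (m r s)))
    (Mr : Fin K → ℕ → ℕ) (hMr : ∀ r N, 0 < Mr r N)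
    (M : ℕ → ℕ) (hM : ∀ N, M N = ∑ r, Mr r N)
    (c : Fin K → ℝ) (hc : ∀ r, 0 < c r) (hcsum : ∑ r, c r = 1)
    (hcr : ∀ r, Tendsto (fun N : ℕ => (Mr r N : ℝ) / (M N : ℝ)) atTop (nhds (c r)))
    (hMtop : Tendsto M atTop atTop)
    (A : (N : ℕ) → Matrix (Σ k, Fin (Mr k N)) (Fin N) ℝ)
    (hA : ∀ N (i : Σ k, Fin (Mr k N)) (j : Fin N), A N i j = p i.1 (j : ℕ))
    (Q : Matrix (Fin K) (Fin K) ℝ)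
    (hQ : ∀ r s, Q r s = Real.sqrt (c r * c s) * m r s) :
    ∀ j : ℕ, j < K →
      Tendsto (fun N : ℕ => nthEig ((A N)ᵀ * A N) j / ((N : ℝ) * (M N : ℝ)))
        atTop (nhds (nthEig Q j)) :=
  singular_values_limit_general K p m hm Mr M c hcr A hA Q hQ
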